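/- For any fixed data matrix X ∈ ℝ^{n×p}, any λ ≥ 0 and M > 0, the function z ↦ F₁(z) is convex on the cube [0,1]^p. -/

import Mathlib

open Matrix Finset Real

noncomputable section

/-- The value `F₁(z)`: the optimal value of the perspective-formulation convex
program with continuous variables `β, W, q` (the residuals `ξ_{:,j} = X_{:,j} −
X_{−j} β_{:,j}` have been substituted into the objective; `β_{i,i} = 0` makes
`X_{−j} β_{:,j} = Σ_{i≠j} β_{i,j} X_{:,i}`). -/
def F1 {n p : ℕ} (X : Matrix (Fin n) (Fin p) ℝ) (lam M : ℝ) (z : Fin p → ℝ) : ℝ :=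
  sInf {c : ℝ | ∃ β W q : Matrix (Fin p) (Fin p) ℝ,
    (∀ i j, 0 ≤ q i j) ∧ (∀ i j, (β i j) ^ 2 ≤ q i j * z j) ∧
    (∀ i j, |β i j| ≤ M * W i j) ∧ (∀ i j, W i j ≤ z i) ∧ (∀ i j, W i j ≤ z j) ∧
    (∀ i, β i i = 0) ∧
    c = (1 / 2) * (∑ j, ∑ k, (X k j - ∑ i ∈ Finset.univ.erase j, β i j * X k i) ^ 2)
        + lam * ∑ j, ∑ i ∈ Finset.univ.erase j, q i j}

/-!
`F₁` is the partial minimum, over `(β, W, q)`, of an objective that is convex in `(β, q)`,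
subject to constraints that cut out a convex cone in `(z, β, W, q)` as long as `z ≥ 0`;
the only nonlinear constraint `β² ≤ q z` describes the rotated second-order cone.
Minimizing a jointly convex function over one block of variables leaves a convex function
of the remaining ones.
-/

open scoped Pointwise

theorem convexOn_sInf_of_exists_le {E : Type*} [AddCommGroup E] [Module ℝ E] {s : Set E}
    (hs : Convex ℝ s) {V : E → Set ℝ} (hne : ∀ z ∈ s, (V z).Nonempty)
    (hbdd : ∀ z ∈ s, BddBelow (V z))
    (hcomb : ∀ z₁ ∈ s, ∀ z₂ ∈ s, ∀ a b : ℝ, 0 ≤ a → 0 ≤ b → a + b = 1 →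
      ∀ c₁ ∈ V z₁, ∀ c₂ ∈ V z₂, ∃ c ∈ V (a • z₁ + b • z₂), c ≤ a * c₁ + b * c₂) :
    ConvexOn ℝ s fun z => sInf (V z) := by
  refine ⟨hs, fun z₁ hz₁ z₂ hz₂ a b ha hb hab => ?_⟩
  calc sInf (V (a • z₁ + b • z₂)) ≤ sInf (a • V z₁ + b • V z₂) := by
        refine le_csInf ((hne z₁ hz₁).smul_set.add (hne z₂ hz₂).smul_set) ?_
        rintro _ ⟨_, ⟨c₁, hc₁, rfl⟩, _, ⟨c₂, hc₂, rfl⟩, rfl⟩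
        obtain ⟨c, hc, hle⟩ := hcomb z₁ hz₁ z₂ hz₂ a b ha hb hab c₁ hc₁ c₂ hc₂
        exact (csInf_le (hbdd _ (hs hz₁ hz₂ ha hb hab)) hc).trans hle
    _ = a • sInf (V z₁) + b • sInf (V z₂) := by
        rw [csInf_add (hne z₁ hz₁).smul_set ((hbdd z₁ hz₁).smul_of_nonneg ha)
          (hne z₂ hz₂).smul_set ((hbdd z₂ hz₂).smul_of_nonneg hb),
          Real.sInf_smul_of_nonneg ha, Real.sInf_smul_of_nonneg hb]

theorem sq_lincomb_le_of_sq_le_mul {a b x₁ x₂ q₁ q₂ z₁ z₂ : ℝ} (ha : 0 ≤ a) (hb : 0 ≤ b)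
    (hq₁ : 0 ≤ q₁) (hq₂ : 0 ≤ q₂) (hz₁ : 0 ≤ z₁) (hz₂ : 0 ≤ z₂)
    (h₁ : x₁ ^ 2 ≤ q₁ * z₁) (h₂ : x₂ ^ 2 ≤ q₂ * z₂) :
    (a * x₁ + b * x₂) ^ 2 ≤ (a * q₁ + b * q₂) * (a * z₁ + b * z₂) := by
  -- AM–GM, since `(x₁ x₂)² ≤ (q₁ z₂) (q₂ z₁)`
  have hcross : 2 * (x₁ * x₂) ≤ q₁ * z₂ + q₂ * z₁ := by
    have : (2 * (x₁ * x₂)) ^ 2 ≤ (q₁ * z₂ + q₂ * z₁) ^ 2 := by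
      nlinarith [mul_le_mul h₁ h₂ (sq_nonneg x₂) (mul_nonneg hq₁ hz₁),
        sq_nonneg (q₁ * z₂ - q₂ * z₁)]
    exact (abs_le_of_sq_le_sq' this (by positivity)).2
  nlinarith [mul_le_mul_of_nonneg_left hcross (mul_nonneg ha hb),
    mul_le_mul_of_nonneg_left h₁ (mul_nonneg ha ha),
    mul_le_mul_of_nonneg_left h₂ (mul_nonneg hb hb)]

section Program

variable {n p : ℕ}

structure IsFeasible (M : ℝ) (z : Fin p → ℝ) (β W q : Matrix (Fin p) (Fin p) ℝ) : Prop where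
  q_nonneg : ∀ i j, 0 ≤ q i j
  sq_le_mul : ∀ i j, β i j ^ 2 ≤ q i j * z j
  abs_le_mul : ∀ i j, |β i j| ≤ M * W i j
  le_left : ∀ i j, W i j ≤ z i
  le_right : ∀ i j, W i j ≤ z j
  diag_eq_zero : ∀ i, β i i = 0

def regressionResidual (X : Matrix (Fin n) (Fin p) ℝ) (β : Matrix (Fin p) (Fin p) ℝ)
    (k : Fin n) (j : Fin p) : ℝ :=
  X k j - ∑ i ∈ univ.erase j, β i j * X k i

def objective (X : Matrix (Fin n) (Fin p) ℝ) (lam : ℝ) (β q : Matrix (Fin p) (Fin p) ℝ) : ℝ :=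
  (1 / 2) * ∑ j, ∑ k, regressionResidual X β k j ^ 2 + lam * ∑ j, ∑ i ∈ univ.erase j, q i j

theorem F1_eq_sInf (X : Matrix (Fin n) (Fin p) ℝ) (lam M : ℝ) (z : Fin p → ℝ) :
    F1 X lam M z =
      sInf {c | ∃ β W q, IsFeasible M z β W q ∧ objective X lam β q = c} := by
  unfold F1
  congr 1
  ext c
  constructor
  · rintro ⟨β, W, q, h₁, h₂, h₃, h₄, h₅, h₆, rfl⟩
    exact ⟨β, W, q, ⟨h₁, h₂, h₃, h₄, h₅, h₆⟩, rfl⟩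
  · rintro ⟨β, W, q, ⟨h₁, h₂, h₃, h₄, h₅, h₆⟩, rfl⟩
    exact ⟨β, W, q, h₁, h₂, h₃, h₄, h₅, h₆, rfl⟩

theorem isFeasible_zero (M : ℝ) {z : Fin p → ℝ} (hz : 0 ≤ z) : IsFeasible M z 0 0 0 where
  q_nonneg _ _ := le_rfl
  sq_le_mul _ _ := by simp
  abs_le_mul _ _ := by simp
  le_left i _ := hz i
  le_right _ j := hz j
  diag_eq_zero _ := rfl

theorem IsFeasible.smul_add {M : ℝ} {z₁ z₂ : Fin p → ℝ}
    {β₁ β₂ W₁ W₂ q₁ q₂ : Matrix (Fin p) (Fin p) ℝ}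
    (h₁ : IsFeasible M z₁ β₁ W₁ q₁) (h₂ : IsFeasible M z₂ β₂ W₂ q₂) (hz₁ : 0 ≤ z₁)
    (hz₂ : 0 ≤ z₂) {a b : ℝ} (ha : 0 ≤ a) (hb : 0 ≤ b) :
    IsFeasible M (a • z₁ + b • z₂) (a • β₁ + b • β₂) (a • W₁ + b • W₂) (a • q₁ + b • q₂) where
  q_nonneg i j := by
    simp only [Matrix.add_apply, Matrix.smul_apply, smul_eq_mul]
    exact add_nonneg (mul_nonneg ha (h₁.q_nonneg i j)) (mul_nonneg hb (h₂.q_nonneg i j))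
  sq_le_mul i j := by
    simp only [Matrix.add_apply, Matrix.smul_apply, Pi.add_apply, Pi.smul_apply, smul_eq_mul]
    exact sq_lincomb_le_of_sq_le_mul ha hb (h₁.q_nonneg i j) (h₂.q_nonneg i j) (hz₁ j) (hz₂ j)
      (h₁.sq_le_mul i j) (h₂.sq_le_mul i j)
  abs_le_mul i j := by
    simp only [Matrix.add_apply, Matrix.smul_apply, smul_eq_mul]
    calc |a * β₁ i j + b * β₂ i j| ≤ a * |β₁ i j| + b * |β₂ i j| := by
          simpa [abs_mul, abs_of_nonneg ha, abs_of_nonneg hb] using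
            abs_add_le (a * β₁ i j) (b * β₂ i j)
      _ ≤ a * (M * W₁ i j) + b * (M * W₂ i j) := by
          gcongr
          exacts [h₁.abs_le_mul i j, h₂.abs_le_mul i j]
      _ = M * (a * W₁ i j + b * W₂ i j) := by ring
  le_left i j := by
    simp only [Matrix.add_apply, Matrix.smul_apply, Pi.add_apply, Pi.smul_apply, smul_eq_mul]
    gcongr
    exacts [h₁.le_left i j, h₂.le_left i j]
  le_right i j := by
    simp only [Matrix.add_apply, Matrix.smul_apply, Pi.add_apply, Pi.smul_apply, smul_eq_mul]
    gcongr
    exacts [h₁.le_right i j, h₂.le_right i j]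
  diag_eq_zero i := by simp [h₁.diag_eq_zero i, h₂.diag_eq_zero i]

theorem regressionResidual_smul_add (X : Matrix (Fin n) (Fin p) ℝ)
    (β₁ β₂ : Matrix (Fin p) (Fin p) ℝ) {a b : ℝ} (hab : a + b = 1) (k : Fin n) (j : Fin p) :
    regressionResidual X (a • β₁ + b • β₂) k j =
      a * regressionResidual X β₁ k j + b * regressionResidual X β₂ k j := by
  simp only [regressionResidual, Matrix.add_apply, Matrix.smul_apply, smul_eq_mul, add_mul,
    sum_add_distrib, mul_assoc, ← mul_sum]
  linear_combination -X k j * hab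

theorem objective_smul_add_le (X : Matrix (Fin n) (Fin p) ℝ) (lam : ℝ)
    (β₁ β₂ q₁ q₂ : Matrix (Fin p) (Fin p) ℝ) {a b : ℝ} (ha : 0 ≤ a) (hb : 0 ≤ b)
    (hab : a + b = 1) :
    objective X lam (a • β₁ + b • β₂) (a • q₁ + b • q₂) ≤
      a * objective X lam β₁ q₁ + b * objective X lam β₂ q₂ := by
  have hsq : ∀ r₁ r₂ : ℝ, (a * r₁ + b * r₂) ^ 2 ≤ a * r₁ ^ 2 + b * r₂ ^ 2 := fun r₁ r₂ =>
    (even_two.convexOn_pow (𝕜 := ℝ)).2 (Set.mem_univ r₁) (Set.mem_univ r₂) ha hb hab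
  calc objective X lam (a • β₁ + b • β₂) (a • q₁ + b • q₂)
      ≤ (1 / 2) * ∑ j, ∑ k,
            (a * regressionResidual X β₁ k j ^ 2 + b * regressionResidual X β₂ k j ^ 2)
          + lam * ∑ j, ∑ i ∈ univ.erase j, (a * q₁ i j + b * q₂ i j) := by
        simp only [objective, regressionResidual_smul_add X β₁ β₂ hab, Matrix.add_apply,
          Matrix.smul_apply, smul_eq_mul]
        gcongr
        exact hsq _ _
    _ = a * objective X lam β₁ q₁ + b * objective X lam β₂ q₂ := by
        simp only [objective, sum_add_distrib, ← mul_sum]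
        ring

theorem objective_nonneg (X : Matrix (Fin n) (Fin p) ℝ) {lam : ℝ} (hlam : 0 ≤ lam)
    {M : ℝ} {z : Fin p → ℝ} {β W q : Matrix (Fin p) (Fin p) ℝ} (h : IsFeasible M z β W q) :
    0 ≤ objective X lam β q := by
  unfold objective
  have hres : 0 ≤ ∑ j, ∑ k, regressionResidual X β k j ^ 2 := by positivity
  have hq : 0 ≤ ∑ j, ∑ i ∈ univ.erase j, q i j :=
    sum_nonneg fun j _ => sum_nonneg fun i _ => h.q_nonneg i j
  positivity

end Program

theorem stmt7_general (n p : ℕ) (X : Matrix (Fin n) (Fin p) ℝ) (lam M : ℝ)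
    (hlam : 0 ≤ lam) :
    ConvexOn ℝ {z : Fin p → ℝ | ∀ i, z i ∈ Set.Icc (0 : ℝ) 1} (F1 X lam M) := by
  have hnonneg : ∀ z : Fin p → ℝ, (∀ i, z i ∈ Set.Icc (0 : ℝ) 1) → 0 ≤ z :=
    fun z hz i => (hz i).1
  rw [show F1 X lam M = _ from funext (F1_eq_sInf X lam M)]
  refine convexOn_sInf_of_exists_le ?_ ?_ ?_ ?_
  · exact fun u hu v hv a b ha hb hab i => convex_Icc 0 1 (hu i) (hv i) ha hb hab
  · exact fun z hz => ⟨_, 0, 0, 0, isFeasible_zero M (hnonneg z hz), rfl⟩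
  · rintro z -
    exact ⟨0, by rintro _ ⟨β, W, q, h, rfl⟩; exact objective_nonneg X hlam h⟩
  · rintro z₁ hz₁ z₂ hz₂ a b ha hb hab _ ⟨β₁, W₁, q₁, h₁, rfl⟩ _ ⟨β₂, W₂, q₂, h₂, rfl⟩
    exact ⟨_, ⟨_, _, _, h₁.smul_add h₂ (hnonneg z₁ hz₁) (hnonneg z₂ hz₂) ha hb, rfl⟩,
      objective_smul_add_le X lam β₁ β₂ q₁ q₂ ha hb hab⟩

/-- **Proposition (convexity).** For any data matrix `X`, any `λ ≥ 0` and `M > 0`,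
the function `z ↦ F₁(z)` is convex on the cube `[0,1]^p`. -/
theorem stmt7 (n p : ℕ) (X : Matrix (Fin n) (Fin p) ℝ) (lam M : ℝ)
    (hlam : 0 ≤ lam) (hM : 0 < M) :
    ConvexOn ℝ {z : Fin p → ℝ | ∀ i, z i ∈ Set.Icc (0 : ℝ) 1} (F1 X lam M) :=
  stmt7_general n p X lam M hlam

end
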